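/- arXiv:0906.3666 — 3 statements merged into one kernel-verified Lean document; each statement's English description precedes it below -/
import Mathlib

section
/- Let a, b be distinct real zeros of a function Ai satisfying Ai''(w) = w·Ai(w) and Ai, Ai' → 0 at +∞ (with the relevant integrability). Then ∫₀^∞ Ai(u+a) Ai(u+b) du = 0, i.e., translates of the Airy function by distinct zeros are orthogonal in L²(0,∞). -/
/-! The translates `Ai (· + a)` and `Ai (· + b)` solve `y'' = (u + a) y` and `y'' = (u + b) y`,
so their Wronskian has derivative `(a - b) Ai (u + a) Ai (u + b)`. It vanishes at `0` because
`a`, `b` are zeros of `Ai`, and at `+∞` because `Ai` and `Ai'` do; hence the integral is zero. -/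

open MeasureTheory Filter Topology

section Wronskian

variable {f f' g g' : ℝ → ℝ}

theorem hasDerivAt_wronskian {p q x : ℝ} (hf : HasDerivAt f (f' x) x)
    (hf' : HasDerivAt f' (p * f x) x) (hg : HasDerivAt g (g' x) x)
    (hg' : HasDerivAt g' (q * g x) x) :
    HasDerivAt (fun u => f' u * g u - f u * g' u) ((p - q) * (f x * g x)) x :=
  ((hf'.mul hg).sub (hf.mul hg')).congr_deriv (by ring)

theorem tendsto_wronskian_atTop_zero (hf : Tendsto f atTop (𝓝 0))
    (hf' : Tendsto f' atTop (𝓝 0)) (hg : Tendsto g atTop (𝓝 0))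
    (hg' : Tendsto g' atTop (𝓝 0)) :
    Tendsto (fun u => f' u * g u - f u * g' u) atTop (𝓝 0) := by
  simpa using (hf'.mul hg).sub (hf.mul hg')

end Wronskian

theorem airy_translates_orthogonal (Ai Ai' : ℝ → ℝ)
    (hAi : ∀ w, HasDerivAt Ai (Ai' w) w)
    (hAi' : ∀ w, HasDerivAt Ai' (w * Ai w) w)
    (hAi0 : Tendsto Ai atTop (nhds 0))
    (hAi'0 : Tendsto Ai' atTop (nhds 0))
    (a b : ℝ) (hab : a ≠ b) (ha : Ai a = 0) (hb : Ai b = 0)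
    (hint : IntegrableOn (fun u => Ai (u + a) * Ai (u + b)) (Set.Ioi 0)) :
    ∫ u in Set.Ioi (0 : ℝ), Ai (u + a) * Ai (u + b) = 0 := by
  have hderiv (u : ℝ) : HasDerivAt (fun u => Ai' (u + a) * Ai (u + b) - Ai (u + a) * Ai' (u + b))
      ((a - b) * (Ai (u + a) * Ai (u + b))) u := by
    simpa only [add_sub_add_left_eq_sub] using
      hasDerivAt_wronskian (p := u + a) (q := u + b)
        ((hAi _).comp_add_const u a) ((hAi' _).comp_add_const u a)
        ((hAi _).comp_add_const u b) ((hAi' _).comp_add_const u b)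
  have hshift (c : ℝ) : Tendsto (· + c) atTop atTop :=
    tendsto_atTop_add_const_right _ c tendsto_id
  have hlim := tendsto_wronskian_atTop_zero (hAi0.comp (hshift a)) (hAi'0.comp (hshift a))
    (hAi0.comp (hshift b)) (hAi'0.comp (hshift b))
  have hftc := integral_Ioi_of_hasDerivAt_of_tendsto' (fun u _ => hderiv u)
    (hint.const_mul (a - b)) hlim
  rw [integral_const_mul] at hftc
  simpa [ha, hb, sub_ne_zero.mpr hab] using hftc
end

section
/- Under the same hypotheses, if a is a real zero of Ai, then ∫₀^∞ (Ai(u+a))² du = (Ai'(a))². -/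
/-!
With `w = u + a`, the primitive `E(w) = w Ai(w)² - Ai'(w)²` of `Ai²` converges at `+∞`, because
`Ai²` is integrable there. As `Ai' → 0`, the limit is that of `w Ai(w)²`, which must vanish:
otherwise `Ai(w)²` would be comparable to `1/w`, which is not integrable. Hence
`∫_a^∞ Ai² = 0 - E(a) = Ai'(a)²`, using `Ai(a) = 0`.
-/

open MeasureTheory Filter Set Topology Asymptotics

theorem integrableOn_Ioi_comp_add_right {E : Type*} [NormedAddCommGroup E] {g : ℝ → E}
    {a : ℝ} : IntegrableOn (fun u => g (u + a)) (Ioi 0) ↔ IntegrableOn g (Ioi a) := by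
  simpa [Function.comp_def] using (measurePreserving_add_right volume a).integrableOn_comp_preimage
    (measurableEmbedding_addRight a) (f := g) (s := Ioi a)

theorem setIntegral_Ioi_comp_add_right {E : Type*} [NormedAddCommGroup E] [NormedSpace ℝ E]
    (g : ℝ → E) (a : ℝ) : ∫ u in Ioi 0, g (u + a) = ∫ w in Ioi a, g w := by
  simpa using (measurePreserving_add_right volume a).setIntegral_preimage_emb
    (measurableEmbedding_addRight a) g (Ioi a)

theorem eq_zero_of_integrableOn_Ioi_of_tendsto_smul {E : Type*} [NormedAddCommGroup E]
    [NormedSpace ℝ E] {f : ℝ → E} {c : ℝ} {L : E} (hf : IntegrableOn f (Ioi c))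
    (hL : Tendsto (fun x => x • f x) atTop (𝓝 L)) : L = 0 := by
  by_contra hL0
  have hpos : 0 < ‖L‖ := norm_pos_iff.2 hL0
  have hinv : (fun x : ℝ => x⁻¹) =O[atTop] f := by
    refine IsBigO.of_bound (2 / ‖L‖) ?_
    filter_upwards [hL.norm.eventually (eventually_gt_nhds (half_lt_self hpos)),
      eventually_gt_atTop 0] with x hx hx0
    rw [norm_smul, Real.norm_of_nonneg hx0.le] at hx
    rw [norm_inv, Real.norm_of_nonneg hx0.le, inv_le_iff_one_le_mul₀ hx0]
    calc (1 : ℝ) = 2 / ‖L‖ * (‖L‖ / 2) := by field_simp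
      _ ≤ 2 / ‖L‖ * (x * ‖f x‖) := by gcongr
      _ = 2 / ‖L‖ * ‖f x‖ * x := by ring
  obtain ⟨b, hb⟩ := integrableAtFilter_atTop_iff.1 <|
    hinv.integrableAtFilter measurable_inv.stronglyMeasurable.stronglyMeasurableAtFilter
      ⟨Ioi c, Ioi_mem_atTop c, hf⟩
  exact not_integrableOn_Ici_inv hb

theorem hasDerivAt_mul_sq_sub_sq_of_airy {y y' : ℝ → ℝ} {w : ℝ} (hy : HasDerivAt y (y' w) w)
    (hy' : HasDerivAt y' (w * y w) w) :
    HasDerivAt (fun w => w * y w ^ 2 - y' w ^ 2) (y w ^ 2) w := by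
  have h : HasDerivAt (fun w => w * y w ^ 2 - y' w ^ 2)
      (1 * y w ^ 2 + w * (2 * y w ^ 1 * y' w) - 2 * y' w ^ 1 * (w * y w)) w :=
    ((hasDerivAt_id' w).mul (hy.pow 2)).sub (hy'.pow 2)
  convert h using 1
  ring

theorem airy_translate_norm_general (Ai Ai' : ℝ → ℝ)
    (hAi : ∀ w, HasDerivAt Ai (Ai' w) w)
    (hAi' : ∀ w, HasDerivAt Ai' (w * Ai w) w)
    (hAi'0 : Tendsto Ai' atTop (nhds 0))
    (a : ℝ) (ha : Ai a = 0)
    (hint : IntegrableOn (fun u => (Ai (u + a)) ^ 2) (Set.Ioi 0)) :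
    ∫ u in Set.Ioi (0 : ℝ), (Ai (u + a)) ^ 2 = (Ai' a) ^ 2 := by
  rw [setIntegral_Ioi_comp_add_right (fun w => Ai w ^ 2)]
  replace hint := (integrableOn_Ioi_comp_add_right (g := fun w => Ai w ^ 2)).1 hint
  set E : ℝ → ℝ := fun w => w * Ai w ^ 2 - Ai' w ^ 2
  have hE : ∀ w, HasDerivAt E (Ai w ^ 2) w := fun w =>
    hasDerivAt_mul_sq_sub_sq_of_airy (hAi w) (hAi' w)
  have hE_lim : Tendsto E atTop (𝓝 (limUnder atTop E)) :=
    tendsto_limUnder_of_hasDerivAt_of_integrableOn_Ioi (fun w _ => hE w) hint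
  have hlim_zero : limUnder atTop E = 0 :=
    eq_zero_of_integrableOn_Ioi_of_tendsto_smul hint <| by
      simpa [E] using hE_lim.add (hAi'0.pow 2)
  rw [integral_Ioi_of_hasDerivAt_of_tendsto (hE a).continuousAt.continuousWithinAt
    (fun w _ => hE w) hint (hlim_zero ▸ hE_lim)]
  simp [E, ha]

theorem airy_translate_norm (Ai Ai' : ℝ → ℝ)
    (hAi : ∀ w, HasDerivAt Ai (Ai' w) w)
    (hAi' : ∀ w, HasDerivAt Ai' (w * Ai w) w)
    (hAi0 : Tendsto Ai atTop (nhds 0))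
    (hAi'0 : Tendsto Ai' atTop (nhds 0))
    (a : ℝ) (ha : Ai a = 0)
    (hint : IntegrableOn (fun u => (Ai (u + a)) ^ 2) (Set.Ioi 0)) :
    ∫ u in Set.Ioi (0 : ℝ), (Ai (u + a)) ^ 2 = (Ai' a) ^ 2 :=
  airy_translate_norm_general Ai Ai' hAi hAi' hAi'0 a ha hint
end

section
/- For real c ≠ 0 and ξ ∈ ℝ, ∫_ℝ (1/√π) e^{−x²} Ai((ξ+x)/c) dx = exp[ (1/(4c³))(ξ + 1/(24c³)) ] · Ai( ξ/c + 1/(16c⁴) ), where Ai is the standard Airy function. -/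
/-!
Along a horizontal line `Im k = s > 0` the Airy integrand `exp (i (y k + k³/3))` decays like
`exp (-s k²)`, and Cauchy's theorem moves the oscillatory integral defining `Ai y` onto such a
line. There the double integral over `x` and `k` converges absolutely, so the Gaussian integral in
`x` can be done first: it is the Fourier transform of a Gaussian and contributes `exp (-k²/(4c²))`.
Completing the cube,
`i (a k + k³/3) - σ k² = i ((a + σ²) w + w³/3) + a σ + 2σ³/3` with `w = k + i σ`,
turns the result into the Airy integral at `a + σ²` along the line `Im w = 1 + σ`,
where `σ = 1/(4c²)`.
-/

open MeasureTheory Real Filter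

/-- The Airy function, defined through the improper oscillatory integral
`Ai(x) = (1/π) ∫₀^∞ cos(xk + k³/3) dk`, interpreted as a limit of proper integrals. -/
noncomputable def Ai (x : ℝ) : ℝ :=
  limUnder atTop (fun R : ℝ => (1 / Real.pi) * ∫ k in (0:ℝ)..R, Real.cos (x * k + k ^ 3 / 3))

open Complex (I)
open scoped Complex Topology

/-- On the real line, `Ai x = (2π)⁻¹ ∫ airyKernel x k dk` as an improper integral. -/
noncomputable def airyKernel (x : ℝ) (z : ℂ) : ℂ := cexp (I * (x * z + z ^ 3 / 3))

lemma differentiable_airyKernel (x : ℝ) : Differentiable ℂ (airyKernel x) := by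
  unfold airyKernel; fun_prop

lemma airyKernel_add (a y : ℝ) (z : ℂ) :
    airyKernel (a + y) z = airyKernel a z * cexp (I * z * y) := by
  rw [airyKernel, airyKernel, ← Complex.exp_add]; push_cast; ring_nf

lemma airyKernel_mul_cexp_neg_mul_sq (a s : ℝ) (z : ℂ) :
    airyKernel a z * cexp (-(s * z ^ 2)) =
      Real.exp (a * s + 2 * s ^ 3 / 3) * airyKernel (a + s ^ 2) (z + s * I) := by
  rw [airyKernel, airyKernel, ← Complex.exp_add, Complex.ofReal_exp, ← Complex.exp_add]
  congr 1
  push_cast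
  linear_combination
    (-(s * z ^ 2) - s ^ 2 * z * I - s ^ 3 * I ^ 2 / 3 - 2 * s ^ 3 / 3 - a * s) * Complex.I_sq

lemma norm_airyKernel_add_mul_I (x t s : ℝ) :
    ‖airyKernel x (t + s * I)‖ = Real.exp (-(x * s) - t ^ 2 * s + s ^ 3 / 3) := by
  rw [airyKernel, Complex.norm_exp]
  congr 1
  simp [pow_succ, Complex.mul_re, Complex.mul_im]
  ring

lemma integrable_airyKernel_add_mul_I (x : ℝ) {s : ℝ} (hs : 0 < s) :
    Integrable fun t : ℝ => airyKernel x (t + s * I) := by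
  refine (integrable_exp_neg_mul_sq hs |>.const_mul (Real.exp (-(x * s) + s ^ 3 / 3))).mono'
    ((differentiable_airyKernel x).continuous.comp (by fun_prop)).aestronglyMeasurable
    (Eventually.of_forall fun t => ?_)
  rw [norm_airyKernel_add_mul_I, ← Real.exp_add]
  exact Real.exp_le_exp.2 (by linarith)

lemma norm_integral_airyKernel_vertical_le (x : ℝ) {r s : ℝ} (hr : r ≠ 0) (hs : 0 ≤ s) :
    ‖∫ y in (0 : ℝ)..s, airyKernel x (r + y * I)‖ ≤
      Real.exp (|x| * s + s ^ 3 / 3) / r ^ 2 := by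
  have hr2 : 0 < r ^ 2 := by positivity
  have hdecay : ∫ y in (0 : ℝ)..s, Real.exp (-r ^ 2 * y) ≤ 1 / r ^ 2 := by
    rw [intervalIntegral.integral_comp_mul_left (fun y => Real.exp y) (neg_ne_zero.2 hr2.ne'),
      integral_exp, mul_zero, Real.exp_zero, smul_eq_mul, inv_neg, neg_mul, ← mul_neg, neg_sub,
      ← div_eq_inv_mul]
    gcongr
    linarith [Real.exp_pos (-r ^ 2 * s)]
  calc ‖∫ y in (0 : ℝ)..s, airyKernel x (r + y * I)‖
      ≤ ∫ y in (0 : ℝ)..s, Real.exp (|x| * s + s ^ 3 / 3) * Real.exp (-r ^ 2 * y) := by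
        refine intervalIntegral.norm_integral_le_of_norm_le hs (Eventually.of_forall fun y hy => ?_)
          (Continuous.intervalIntegrable (by fun_prop) _ _)
        rw [norm_airyKernel_add_mul_I, ← Real.exp_add]
        refine Real.exp_le_exp.2 ?_
        have hxy : -(x * y) ≤ |x| * s := by
          nlinarith [neg_abs_le x, abs_nonneg x, hy.1, hy.2]
        linarith [pow_le_pow_left₀ hy.1.le hy.2 3]
    _ ≤ Real.exp (|x| * s + s ^ 3 / 3) * (1 / r ^ 2) := by
        rw [intervalIntegral.integral_const_mul]; gcongr
    _ = Real.exp (|x| * s + s ^ 3 / 3) / r ^ 2 := by ring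

lemma tendsto_integral_airyKernel_vertical (x : ℝ) {s : ℝ} (hs : 0 ≤ s) :
    Tendsto (fun r : ℝ => ∫ y in (0 : ℝ)..s, airyKernel x (r + y * I)) (cocompact ℝ)
      (𝓝 0) := by
  have hsq : Tendsto (fun r : ℝ => r ^ 2) (cocompact ℝ) atTop := by
    simpa only [Function.comp_def, Real.norm_eq_abs, sq_abs] using
      (tendsto_pow_atTop two_ne_zero).comp (tendsto_norm_cocompact_atTop (E := ℝ))
  refine squeeze_zero_norm' ?_
    ((tendsto_const_nhds (x := Real.exp (|x| * s + s ^ 3 / 3))).div_atTop hsq)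
  filter_upwards [hsq.eventually_gt_atTop 0] with r hr
  exact norm_integral_airyKernel_vertical_le x (by rintro rfl; simp at hr) hs

/-- Cauchy's theorem on the rectangles `[-R, R] × [0, s]`, whose vertical sides vanish as
`R → ∞`. -/
theorem tendsto_intervalIntegral_neg_self_of_differentiable {g : ℂ → ℂ} (hg : Differentiable ℂ g)
    {s : ℝ} (hint : Integrable fun t : ℝ => g (t + s * I))
    (hvert : Tendsto (fun r : ℝ => ∫ y in (0 : ℝ)..s, g (r + y * I)) (cocompact ℝ) (𝓝 0)) :
    Tendsto (fun R : ℝ => ∫ t in -R..R, g t) atTop (𝓝 (∫ t : ℝ, g (t + s * I))) := by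
  have hrect : ∀ R : ℝ, ∫ t in -R..R, g t = (∫ t in -R..R, g (t + s * I))
      - I * (∫ y in (0 : ℝ)..s, g (R + y * I))
      + I * (∫ y in (0 : ℝ)..s, g ((-R : ℝ) + y * I)) := by
    intro R
    have h := Complex.integral_boundary_rect_eq_zero_of_differentiableOn g (-R : ℝ) (R + s * I)
      hg.differentiableOn
    simp only [Complex.add_re, Complex.add_im, Complex.ofReal_re, Complex.ofReal_im,
      Complex.mul_re, Complex.mul_im, Complex.I_re, Complex.I_im, Complex.ofReal_zero,
      mul_zero, mul_one, zero_mul, sub_zero, zero_add, add_zero, smul_eq_mul] at h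
    linear_combination h
  have hline := intervalIntegral_tendsto_integral hint tendsto_neg_atTop_atBot tendsto_id
  have hright := hvert.comp (tendsto_id.mono_right atTop_le_cocompact)
  have hleft := hvert.comp (tendsto_neg_atTop_atBot.mono_right atBot_le_cocompact)
  have hlim := (hline.sub (hright.const_mul I)).add (hleft.const_mul I)
  rw [mul_zero, sub_zero, add_zero] at hlim
  exact hlim.congr fun R => (hrect R).symm

lemma integral_neg_self_eq_integral_comp_neg_add {E : Type*} [NormedAddCommGroup E]
    [NormedSpace ℝ E] {f : ℝ → E} (hf : Continuous f) (R : ℝ) :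
    ∫ t in -R..R, f t = ∫ t in (0 : ℝ)..R, (f (-t) + f t) := by
  have hneg : Continuous fun t => f (-t) := hf.comp continuous_neg
  rw [intervalIntegral.integral_add (hneg.intervalIntegrable _ _)
    (hf.intervalIntegrable _ _), intervalIntegral.integral_comp_neg, neg_zero,
    intervalIntegral.integral_add_adjacent_intervals (hf.intervalIntegrable _ _)
      (hf.intervalIntegrable _ _)]

lemma integral_airyKernel_neg_self (x R : ℝ) :
    ∫ t in -R..R, airyKernel x t =
      ((2 * ∫ k in (0 : ℝ)..R, Real.cos (x * k + k ^ 3 / 3) : ℝ) : ℂ) := by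
  have hsum : ∀ t : ℝ, airyKernel x (-t : ℝ) + airyKernel x t =
      ((2 * Real.cos (x * t + t ^ 3 / 3) : ℝ) : ℂ) := by
    intro t
    rw [airyKernel, airyKernel]
    push_cast
    rw [Complex.two_cos]
    ring_nf
  rw [integral_neg_self_eq_integral_comp_neg_add (f := fun t : ℝ => airyKernel x t)
      ((differentiable_airyKernel x).continuous.comp Complex.continuous_ofReal),
    intervalIntegral.integral_congr fun t _ => hsum t, intervalIntegral.integral_ofReal,
    intervalIntegral.integral_const_mul]

theorem integral_airyKernel_add_mul_I (x : ℝ) {s : ℝ} (hs : 0 < s) :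
    ∫ t : ℝ, airyKernel x (t + s * I) = 2 * π * (Ai x : ℂ) := by
  set J := ∫ t : ℝ, airyKernel x (t + s * I)
  have hJ : Tendsto
      (fun R : ℝ => ((2 * ∫ k in (0 : ℝ)..R, Real.cos (x * k + k ^ 3 / 3) : ℝ) : ℂ))
      atTop (𝓝 J) := by
    simpa only [integral_airyKernel_neg_self] using
      tendsto_intervalIntegral_neg_self_of_differentiable (differentiable_airyKernel x)
        (integrable_airyKernel_add_mul_I x hs) (tendsto_integral_airyKernel_vertical x hs.le)
  have hre : Tendsto (fun R : ℝ => 2 * ∫ k in (0 : ℝ)..R, Real.cos (x * k + k ^ 3 / 3)) atTop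
      (𝓝 J.re) := by
    simpa only [Function.comp_def, Complex.ofReal_re] using
      (Complex.continuous_re.tendsto J).comp hJ
  have him : J.im = 0 := tendsto_nhds_unique
    (by simpa only [Function.comp_def, Complex.ofReal_im] using
      (Complex.continuous_im.tendsto J).comp hJ) tendsto_const_nhds
  have hAi : Ai x = J.re / (2 * π) :=
    ((hre.div_const (2 * π)).congr fun R => by ring).limUnder_eq
  have hJ_real : J = J.re := Complex.ext (by simp) (by simp [him])
  rw [hJ_real, hAi]
  push_cast
  field_simp

lemma integral_gaussian_mul_cexp_I_mul (w : ℂ) :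
    ∫ x : ℝ, ((1 / √π * Real.exp (-x ^ 2) : ℝ) : ℂ) * cexp (I * w * x) =
      cexp (-w ^ 2 / 4) := by
  have hπ : (π : ℂ) ^ (1 / 2 : ℂ) = (√π : ℝ) := by
    rw [Real.sqrt_eq_rpow, Complex.ofReal_cpow Real.pi_pos.le]; norm_num
  have h := fourierIntegral_gaussian (b := 1) (by norm_num) w
  rw [div_one, mul_one, hπ] at h
  calc ∫ x : ℝ, ((1 / √π * Real.exp (-x ^ 2) : ℝ) : ℂ) * cexp (I * w * x)
      = ((1 / √π : ℝ) : ℂ) * ∫ x : ℝ, cexp (I * w * x) * cexp (-1 * x ^ 2) := by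
        rw [← integral_const_mul]; congr 1; ext x; push_cast; ring_nf
    _ = cexp (-w ^ 2 / 4) := by
        rw [h, ← mul_assoc, ← Complex.ofReal_mul, one_div_mul_cancel (by positivity),
          Complex.ofReal_one, one_mul]

lemma integral_gaussian_mul_airyKernel (a b : ℝ) (z : ℂ) :
    ∫ x : ℝ, ((1 / √π * Real.exp (-x ^ 2) : ℝ) : ℂ) * airyKernel (a + b * x) z =
      airyKernel a z * cexp (-(b * z) ^ 2 / 4) := by
  rw [← integral_gaussian_mul_cexp_I_mul, ← integral_const_mul]
  congr 1; ext x
  rw [airyKernel_add]; push_cast; ring_nf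

lemma integrable_gaussian_mul_airyKernel (a b : ℝ) {s : ℝ} (hs : 0 < s) :
    Integrable (fun p : ℝ × ℝ => ((1 / √π * Real.exp (-p.1 ^ 2) : ℝ) : ℂ) *
      airyKernel (a + b * p.1) (p.2 + s * I)) (volume.prod volume) := by
  have hgauss : Integrable fun x : ℝ => 1 / √π * Real.exp (-x ^ 2 - b * s * x) := by
    refine ((integrable_cexp_quadratic (b := 1) one_pos (-(b * s)) 0).norm.const_mul
      (1 / √π)).congr (Eventually.of_forall fun x => ?_)
    simp only [Complex.norm_exp]
    congr 2
    simp [← Complex.ofReal_pow]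
    ring
  have hnorm : ∀ p : ℝ × ℝ, ‖((1 / √π * Real.exp (-p.1 ^ 2) : ℝ) : ℂ) *
      airyKernel (a + b * p.1) (p.2 + s * I)‖ =
        1 / √π * Real.exp (-p.1 ^ 2 - b * s * p.1) * ‖airyKernel a (p.2 + s * I)‖ := by
    rintro ⟨x, t⟩
    have hre : (I * (t + s * I) * ((b * x : ℝ) : ℂ)).re = -(b * s * x) := by simp; ring
    rw [airyKernel_add, norm_mul, norm_mul, Complex.norm_real, Real.norm_of_nonneg (by positivity),
      Complex.norm_exp, hre, sub_eq_add_neg, Real.exp_add]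
    ring
  refine (hgauss.mul_prod (integrable_airyKernel_add_mul_I a hs).norm).mono' ?_
    (Eventually.of_forall fun p => (hnorm p).le)
  exact Continuous.aestronglyMeasurable (by unfold airyKernel; fun_prop)

theorem airy_transform_gaussian_general (c : ℝ) (ξ : ℝ) :
    ∫ x : ℝ, (1 / Real.sqrt Real.pi) * Real.exp (-x ^ 2) * Ai ((ξ + x) / c) =
      Real.exp ((1 / (4 * c ^ 3)) * (ξ + 1 / (24 * c ^ 3))) *
        Ai (ξ / c + 1 / (16 * c ^ 4)) := by
  set s : ℝ := c⁻¹ ^ 2 / 4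
  have hAi (y : ℝ) : (Ai y : ℂ) = (∫ t : ℝ, airyKernel y (t + (1 : ℝ) * I)) / (2 * π) := by
    rw [integral_airyKernel_add_mul_I y one_pos]; field_simp
  apply Complex.ofReal_injective
  calc ((∫ x : ℝ, 1 / √π * Real.exp (-x ^ 2) * Ai ((ξ + x) / c) : ℝ) : ℂ)
      = (∫ x : ℝ, ∫ t : ℝ, ((1 / √π * Real.exp (-x ^ 2) : ℝ) : ℂ) *
          airyKernel (ξ / c + c⁻¹ * x) (t + (1 : ℝ) * I)) / (2 * π) := by
        rw [← integral_complex_ofReal, ← integral_div]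
        congr 1; ext x
        rw [Complex.ofReal_mul, hAi, integral_const_mul, mul_div_assoc, add_div, div_eq_inv_mul x c]
    _ = (∫ t : ℝ, airyKernel (ξ / c) (t + (1 : ℝ) * I) *
          cexp (-(c⁻¹ * (t + (1 : ℝ) * I)) ^ 2 / 4)) / (2 * π) := by
        rw [integral_integral_swap (integrable_gaussian_mul_airyKernel _ _ one_pos)]
        simp_rw [integral_gaussian_mul_airyKernel]
    _ = (∫ t : ℝ, Real.exp (ξ / c * s + 2 * s ^ 3 / 3) *
          airyKernel (ξ / c + s ^ 2) (t + (1 + s : ℝ) * I)) / (2 * π) := by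
        congr 1; refine integral_congr_ae (Eventually.of_forall fun t => ?_)
        have hsq : -((c⁻¹ : ℝ) * (t + (1 : ℝ) * I) : ℂ) ^ 2 / 4 =
            -(s * (t + (1 : ℝ) * I) ^ 2) := by
          simp only [s]; push_cast; ring
        dsimp only
        rw [hsq, airyKernel_mul_cexp_neg_mul_sq]
        push_cast; ring_nf
    _ = ((Real.exp (ξ / c * s + 2 * s ^ 3 / 3) * Ai (ξ / c + s ^ 2) : ℝ) : ℂ) := by
        rw [integral_const_mul, integral_airyKernel_add_mul_I _ (by positivity)]
        push_cast; field_simp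
    _ = _ := by congr 3 <;> ring

theorem airy_transform_gaussian (c : ℝ) (hc : c ≠ 0) (ξ : ℝ) :
    ∫ x : ℝ, (1 / Real.sqrt Real.pi) * Real.exp (-x ^ 2) * Ai ((ξ + x) / c) =
      Real.exp ((1 / (4 * c ^ 3)) * (ξ + 1 / (24 * c ^ 3))) *
        Ai (ξ / c + 1 / (16 * c ^ 4)) :=
  airy_transform_gaussian_general c ξ
end
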